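/- For every positive integer k there exists a finite simple directed graph G_k on 5k+1 vertices in which every vertex has in-degree at least one, such that the smallest strict majority dynamic monopoly of G_k has exactly 2k vertices; in particular dyn(G_k)/|G_k| = 2k/(5k+1) → 2/5 as k → ∞. -/

import Mathlib

/-!
Basic notions for dynamic monopolies in finite directed graphs.
A directed graph on a vertex type `V` is given by its adjacency relation
`Adj : V → V → Prop`, where `Adj u v` means there is an edge from `u` to `v`.
-/

variable {V : Type*}

/-- The in-degree of a vertex `v`: the number of vertices `u` with an edge from `u` to `v`. -/
noncomputable def inDeg (Adj : V → V → Prop) (v : V) : ℕ :=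
  {u | Adj u v}.ncard

/-- A directed graph is simple: no loops, and no two oppositely directed edges
between the same pair of vertices. -/
def IsSimple (Adj : V → V → Prop) : Prop :=
  Irreflexive Adj ∧ ∀ u v, Adj u v → ¬ Adj v u

/-- A directed graph is strongly connected if any vertex is reachable from any other
by a directed path. -/
def StronglyConnected (Adj : V → V → Prop) : Prop :=
  ∀ u v : V, Relation.ReflTransGen Adj u v

/-- `M` is a dynamic monopoly (dynamo) for `(G, τ)`: the vertex set can be partitioned
into levels `D_0 = M, D_1, …, D_t` (encoded by a level function) such that every vertex
`v` of level `i ≥ 1` receives at least `τ v` edges from vertices of smaller level. -/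
def IsDynamo (Adj : V → V → Prop) (τ : V → ℕ) (M : Set V) : Prop :=
  ∃ level : V → ℕ,
    (∀ v, level v = 0 ↔ v ∈ M) ∧
    ∀ v, 1 ≤ level v → τ v ≤ {u | Adj u v ∧ level u < level v}.ncard

/-- The strict majority threshold `⌈(deg^in(v)+1)/2⌉` (as a natural number,
`(d + 2) / 2 = ⌈(d+1)/2⌉`). -/
noncomputable def strictMajority (Adj : V → V → Prop) (v : V) : ℕ :=
  (inDeg Adj v + 2) / 2

/-- The `f`-value of a vertex `v` with respect to an ordering `σ` of the vertices:
the number of in-neighbours of `v` appearing after `v` minus the number of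
in-neighbours of `v` appearing before `v`. -/
noncomputable def fval [Fintype V] (Adj : V → V → Prop)
    (σ : V ≃ Fin (Fintype.card V)) (v : V) : ℤ :=
  ({u | Adj u v ∧ σ v < σ u}.ncard : ℤ) - ({u | Adj u v ∧ σ u < σ v}.ncard : ℤ)

/-!
In `G_k` no edge enters a copy of `K_5` from outside, and every vertex of a copy has in-degree 2,
hence threshold 2. So the first non-seed vertex of a copy to become active has two earlier
in-neighbours, both seeds of the same copy: every dynamo meets every copy in at least two
vertices. Conversely, seeding two vertices `a, a + 1` of each copy activates the rest of the copy
one vertex at a time, and then `x`, whose threshold `⌈(k + 1) / 2⌉` is at most `k`.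
-/

open scoped Function
open Set

section Dynamo

variable {Adj : V → V → Prop} {τ : V → ℕ} {M : Set V}

theorem isDynamo_of_forall_adj_level_lt (level : V → ℕ) (h0 : ∀ v, level v = 0 ↔ v ∈ M)
    (hlt : ∀ u v, Adj u v → v ∉ M → level u < level v) (hτ : ∀ v ∉ M, τ v ≤ inDeg Adj v) :
    IsDynamo Adj τ M := by
  refine ⟨level, h0, fun v hv => ?_⟩
  have hvM : v ∉ M := fun hvM => by have := (h0 v).2 hvM; omega
  have hall : {u | Adj u v ∧ level u < level v} = {u | Adj u v} :=
    Set.ext fun u => and_iff_left_of_imp fun huv => hlt u v huv hvM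
  rw [hall]
  exact hτ v hvM

theorem IsDynamo.le_ncard_inter (hM : IsDynamo Adj τ M) {B : Set V} (hB : B.Finite)
    (hclosed : ∀ u v, Adj u v → v ∈ B → u ∈ B) {t : ℕ} (hτ : ∀ v ∈ B, t ≤ τ v)
    (ht : t ≤ B.ncard) : t ≤ (M ∩ B).ncard := by
  obtain ⟨level, h0, hlev⟩ := hM
  by_cases hBM : B ⊆ M
  · rwa [inter_eq_right.2 hBM]
  obtain ⟨v, ⟨hvB, hvM⟩, hmin⟩ :=
    (B \ M).exists_min_image level hB.sdiff (sdiff_nonempty.2 hBM)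
  have hv : 1 ≤ level v := Nat.one_le_iff_ne_zero.2 fun h => hvM ((h0 v).1 h)
  have hsub : {u | Adj u v ∧ level u < level v} ⊆ M ∩ B := by
    rintro u ⟨huv, hlt⟩
    have huB := hclosed u v huv hvB
    by_contra huM
    have := hmin u ⟨huB, fun hu => huM ⟨hu, huB⟩⟩
    omega
  calc t ≤ τ v := hτ v hvB
    _ ≤ _ := hlev v hv
    _ ≤ (M ∩ B).ncard := ncard_le_ncard hsub (hB.inter_of_right M)

theorem IsDynamo.mul_le_ncard [Finite V] (hM : IsDynamo Adj τ M) {ι : Type*} [Fintype ι]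
    (B : ι → Set V) (hdisj : Pairwise (Disjoint on B))
    (hclosed : ∀ i u v, Adj u v → v ∈ B i → u ∈ B i) {t : ℕ} (hτ : ∀ i, ∀ v ∈ B i, t ≤ τ v)
    (ht : ∀ i, t ≤ (B i).ncard) : Fintype.card ι * t ≤ M.ncard := by
  have hdisj' : Pairwise (Disjoint on fun i => M ∩ B i) := fun i j hij =>
    (hdisj hij).mono inter_subset_right inter_subset_right
  calc Fintype.card ι * t = ∑ _i : ι, t := by simp
    _ ≤ ∑ i, (M ∩ B i).ncard := Finset.sum_le_sum fun i _ =>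
        hM.le_ncard_inter (toFinite _) (hclosed i) (hτ i) (ht i)
    _ = (⋃ i, M ∩ B i).ncard := by
        rw [ncard_iUnion_of_finite (fun _ => toFinite _) hdisj', finsum_eq_sum_of_fintype]
    _ ≤ M.ncard := ncard_le_ncard (iUnion_subset fun _ => inter_subset_left)

end Dynamo

section Equiv

variable {W : Type*} (e : V ≃ W) {Adj : W → W → Prop}

theorem ncard_preimage_equiv (s : Set W) : (e ⁻¹' s).ncard = s.ncard :=
  ncard_preimage_of_injective_subset_range e.injective (by simp)

theorem IsSimple.onFun (h : IsSimple Adj) : IsSimple (Adj on e) :=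
  ⟨fun v => h.1 (e v), fun u v => h.2 (e u) (e v)⟩

theorem inDeg_onFun (v : V) : inDeg (Adj on e) v = inDeg Adj (e v) :=
  ncard_preimage_equiv e {w | Adj w (e v)}

theorem strictMajority_onFun : strictMajority (Adj on e) = strictMajority Adj ∘ e := by
  ext v
  simp only [strictMajority, inDeg_onFun, Function.comp_apply]

theorem IsDynamo.onFun {τ : W → ℕ} {M : Set W} (h : IsDynamo Adj τ M) :
    IsDynamo (Adj on e) (τ ∘ e) (e ⁻¹' M) := by
  obtain ⟨level, h0, hlev⟩ := h
  refine ⟨level ∘ e, fun v => h0 (e v), fun v hv => ?_⟩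
  have hpre : {u | (Adj on e) u v ∧ (level ∘ e) u < (level ∘ e) v} =
      e ⁻¹' {w | Adj w (e v) ∧ level w < level (e v)} := rfl
  rw [hpre, ncard_preimage_equiv]
  exact hlev (e v) hv

theorem isDynamo_onFun_iff {τ : W → ℕ} {M : Set W} :
    IsDynamo (Adj on e) (τ ∘ e) (e ⁻¹' M) ↔ IsDynamo Adj τ M := by
  refine ⟨fun h => ?_, IsDynamo.onFun e⟩
  have hAdj : ((Adj on e) on e.symm) = Adj := by ext; simp [Function.onFun]
  have hτ : (τ ∘ e) ∘ e.symm = τ := by ext; simp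
  simpa only [hAdj, hτ, Equiv.symm_preimage_preimage] using h.onFun e.symm

end Equiv

/-- The graph `G_k`: `some (i, a)` is vertex `a` of the `i`-th copy of `K_5`, oriented by
`a → a + 1, a + 2`, and `none` is the vertex `x`, which receives the edge from vertex `0` of
each copy. -/
def extremalDigraph (k : ℕ) : Option (Fin k × ZMod 5) → Option (Fin k × ZMod 5) → Prop
  | some (i, a), some (j, b) => i = j ∧ (b = a + 1 ∨ b = a + 2)
  | some (_, a), none => a = 0
  | none, _ => False

namespace extremalDigraph

variable {k : ℕ}

theorem isSimple : IsSimple (extremalDigraph k) := by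
  have hirrefl : ∀ a : ZMod 5, ¬(a = a + 1 ∨ a = a + 2) := by decide
  have hasymm : ∀ a b : ZMod 5, (b = a + 1 ∨ b = a + 2) → ¬(a = b + 1 ∨ a = b + 2) := by
    decide
  refine ⟨?_, ?_⟩
  · rintro (_ | ⟨i, a⟩) h
    exacts [h, hirrefl a h.2]
  · rintro (_ | ⟨i, a⟩) (_ | ⟨j, b⟩) huv hvu
    exacts [huv, huv, hvu, hasymm a b huv.2 hvu.2]

theorem inDeg_some (i : Fin k) (b : ZMod 5) : inDeg (extremalDigraph k) (some (i, b)) = 2 := by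
  have hset : {u | extremalDigraph k u (some (i, b))} = {some (i, b - 1), some (i, b - 2)} := by
    ext (_ | ⟨j, a⟩)
    · simp [extremalDigraph]
    · simp only [extremalDigraph, mem_ofPred_eq, mem_insert_iff, mem_singleton_iff,
        Option.some.injEq, Prod.mk.injEq, eq_sub_iff_add_eq, eq_comm (a := b)]
      tauto
  have hne : ∀ c : ZMod 5, c - 1 ≠ c - 2 := by decide
  rw [inDeg, hset, ncard_pair (by simpa using hne b)]

theorem inDeg_none : inDeg (extremalDigraph k) none = k := by
  have hset : {u | extremalDigraph k u none} = range fun i => some (i, 0) := by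
    ext (_ | ⟨j, a⟩) <;> simp [extremalDigraph, eq_comm]
  rw [inDeg, hset, ← image_univ, ncard_image_of_injective _ (fun i j h => by simpa using h)]
  simp

theorem strictMajority_some (i : Fin k) (a : ZMod 5) :
    strictMajority (extremalDigraph k) (some (i, a)) = 2 := by
  rw [strictMajority, inDeg_some]

theorem isDynamo_seeds (hk : 1 ≤ k) :
    IsDynamo (extremalDigraph k) (strictMajority (extremalDigraph k))
      (some '' (univ ×ˢ {0, 1})) := by
  refine isDynamo_of_forall_adj_level_lt
    (fun | none => 4 | some (_, a) => a.val - 1) ?_ ?_ ?_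
  · rintro (_ | ⟨i, a⟩)
    · simp
    · simp only [Option.some_injective _ |>.mem_set_image, mem_prod, mem_univ, true_and,
        mem_insert_iff, mem_singleton_iff]
      revert a; decide
  · rintro (_ | ⟨i, a⟩) (_ | ⟨j, b⟩) huv hv
    · exact huv.elim
    · exact huv.elim
    · have := ZMod.val_lt a
      show a.val - 1 < 4
      omega
    · simp only [Option.some_injective _ |>.mem_set_image, mem_prod, mem_univ, true_and,
        mem_insert_iff, mem_singleton_iff, not_or] at hv
      have key : ∀ a b : ZMod 5, (b = a + 1 ∨ b = a + 2) → b ≠ 0 → b ≠ 1 →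
          a.val - 1 < b.val - 1 := by decide
      exact key a b huv.2 hv.1 hv.2
  · rintro (_ | ⟨i, a⟩) -
    · rw [strictMajority, inDeg_none]; omega
    · rw [strictMajority_some, inDeg_some]

theorem ncard_seeds :
    (some '' (univ ×ˢ {0, 1}) : Set (Option (Fin k × ZMod 5))).ncard = 2 * k := by
  rw [ncard_image_of_injective _ (Option.some_injective _), ncard_prod, ncard_univ,
    ncard_pair (by decide)]
  simp [mul_comm]

theorem two_mul_le_ncard_of_isDynamo {M : Set (Option (Fin k × ZMod 5))}
    (hM : IsDynamo (extremalDigraph k) (strictMajority (extremalDigraph k)) M) :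
    2 * k ≤ M.ncard := by
  have := hM.mul_le_ncard (t := 2) (fun i => range fun a => some (i, a)) ?_ ?_ ?_ ?_
  · simpa [mul_comm] using this
  · intro i j hij
    simp [Function.onFun, disjoint_iff_forall_ne, hij]
  · rintro i (_ | ⟨j, a⟩) v huv ⟨b, rfl⟩
    · exact huv.elim
    · exact ⟨a, by rw [huv.1]⟩
  · rintro i _ ⟨a, rfl⟩
    rw [strictMajority_some]
  · intro i
    rw [← image_univ, ncard_image_of_injective _ (fun a b h => by simpa using h)]
    simp

end extremalDigraph

theorem tendsto_two_mul_div_five_mul_add_one :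
    Filter.Tendsto (fun k : ℕ => (2 * k : ℝ) / (5 * k + 1)) Filter.atTop (nhds (2 / 5)) := by
  have h := (tendsto_natCast_div_add_atTop (1 / 5 : ℝ)).const_mul (2 / 5)
  rw [mul_one] at h
  refine h.congr fun k => ?_
  field_simp

/-- for every `k ≥ 1` there is a simple directed graph `G_k` on `5k + 1`
vertices with positive minimum in-degree whose smallest strict majority dynamic monopoly
has exactly `2k` vertices; in particular `dyn(G_k)/|G_k| = 2k/(5k+1) → 2/5` as `k → ∞`. -/
theorem exists_graphs_with_dynamo_ratio_tendsto_two_fifths :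
    (∀ k : ℕ, 1 ≤ k →
      ∃ Adj : Fin (5 * k + 1) → Fin (5 * k + 1) → Prop,
        IsSimple Adj ∧ (∀ v, 1 ≤ inDeg Adj v) ∧
        (∃ M : Set (Fin (5 * k + 1)),
          IsDynamo Adj (strictMajority Adj) M ∧ M.ncard = 2 * k) ∧
        (∀ M : Set (Fin (5 * k + 1)),
          IsDynamo Adj (strictMajority Adj) M → 2 * k ≤ M.ncard)) ∧
    Filter.Tendsto (fun k : ℕ => (2 * k : ℝ) / (5 * k + 1)) Filter.atTop
      (nhds ((2 : ℝ) / 5)) := by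
  refine ⟨fun k hk => ?_, tendsto_two_mul_div_five_mul_add_one⟩
  let e : Fin (5 * k + 1) ≃ Option (Fin k × ZMod 5) :=
    (Fintype.equivFinOfCardEq (by simp [mul_comm])).symm
  have hτ := strictMajority_onFun e (Adj := extremalDigraph k)
  refine ⟨extremalDigraph k on e, extremalDigraph.isSimple.onFun e, fun v => ?_, ?_,
    fun M hM => ?_⟩
  · rw [inDeg_onFun]
    rcases e v with _ | ⟨i, a⟩
    · rw [extremalDigraph.inDeg_none]; exact hk
    · rw [extremalDigraph.inDeg_some]; omega
  · refine ⟨e ⁻¹' (some '' (univ ×ˢ {0, 1})), ?_, ?_⟩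
    · rw [hτ, isDynamo_onFun_iff]
      exact extremalDigraph.isDynamo_seeds hk
    · rw [ncard_preimage_equiv]
      exact extremalDigraph.ncard_seeds
  · rw [hτ, ← e.preimage_symm_preimage M, isDynamo_onFun_iff] at hM
    simpa only [ncard_preimage_equiv] using extremalDigraph.two_mul_le_ncard_of_isDynamo hM
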